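/- Quantitative Borel–Cantelli lemma: let (X, μ) be a probability space and (E_n)_{n≥1} a sequence of measurable sets. For x ∈ X and N ≥ 1 let A(N,x) = #{n ≤ N : x ∈ E_n}, and let Φ(N) = Σ_{n≤N} μ(E_n). Suppose there exist nonnegative reals C_k with Σ_{k≥1} C_k < ∞ such that μ(E_n ∩ E_m) ≤ μ(E_n)μ(E_m) + μ(E_n)·C_{n−m} for all integers n > m ≥ 1. Then for every ε > 0 and μ-almost every x ∈ X, there is a constant K = K(x) such that |A(N,x) − Φ(N)| ≤ K·(Φ(N)^{1/2}·(log(Φ(N)+2))^{3/2+ε} + 1) for all N ≥ 1. -/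

import Mathlib

/-!
Write `S N = #{n ≤ N : x ∈ Eₙ}`. The correlation hypothesis bounds the variance of every block
sum `S n - S m` by `K (Φ n - Φ m)` with `K = 1 + 2 ∑ Cₖ`. Reparametrise time by the first
index `M j` at which `Φ` reaches `j`, so that block variances become proportional to block
lengths in `j`. For `j ≤ 2^s`, dyadic chaining (Rademacher–Menshov) together with
Cauchy–Schwarz gives `|S (M j) - Φ (M j)|² ≤ (s + 1) Y_s`, where `Y_s` is the sum of the
squared increments over all dyadic blocks of `[0, 2^s]` and `E Y_s ≤ K (s + 1) (2^s + 1)`.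
Markov's inequality and Borel–Cantelli give `Y_s < (s + 1)^(2p-1) 2^s` eventually for any
`p > 3/2`, i.e. `|S (M j) - Φ (M j)| = O(√j (log j)^p)`; monotonicity of `S` and `Φ`
interpolates between consecutive `M j`. If `Φ` stays bounded, Borel–Cantelli alone shows that
almost every `x` lies in finitely many `Eₙ`.
-/

open MeasureTheory ProbabilityTheory Filter Finset

namespace QuantitativeBorelCantelli

section Dyadic

def dyadicLevelSqSum (f : ℕ → ℝ) (s h : ℕ) : ℝ :=
  ∑ u ∈ range (2 ^ (s - h)), (f ((u + 1) * 2 ^ h) - f (u * 2 ^ h)) ^ 2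

def dyadicSqSum (f : ℕ → ℝ) (s : ℕ) : ℝ :=
  ∑ h ∈ range (s + 1), dyadicLevelSqSum f s h

lemma dyadicLevelSqSum_nonneg (f : ℕ → ℝ) (s h : ℕ) : 0 ≤ dyadicLevelSqSum f s h :=
  sum_nonneg fun _ _ => sq_nonneg _

variable {f : ℕ → ℝ} {s : ℕ}

lemma abs_sub_le_of_dyadic_blocks {B : ℕ → ℝ} (hB0 : ∀ h, 0 ≤ B h)
    (hB : ∀ h u, (u + 1) * 2 ^ h ≤ 2 ^ s → |f ((u + 1) * 2 ^ h) - f (u * 2 ^ h)| ≤ B h) :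
    ∀ h t r, r < 2 ^ h → t * 2 ^ h + r ≤ 2 ^ s →
      |f (t * 2 ^ h + r) - f (t * 2 ^ h)| ≤ ∑ h' ∈ range h, B h' := by
  intro h
  induction h with
  | zero =>
    intro t r hr _
    obtain rfl : r = 0 := by omega
    simp
  | succ h ih =>
    intro t r hr hle
    have htwo : t * 2 ^ (h + 1) = 2 * t * 2 ^ h := by ring
    rw [sum_range_succ, htwo]
    rcases lt_or_ge r (2 ^ h) with hr' | hr'
    · have := ih (2 * t) r hr' (by rwa [← htwo])
      linarith [hB0 h]
    · -- split at the midpoint `(2t+1) 2^h`: one block of level `h`, then a shorter chain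
      have hmid : (2 * t + 1) * 2 ^ h = 2 * t * 2 ^ h + 2 ^ h := by ring
      have hblock := hB h (2 * t) (by rw [hmid]; rw [htwo] at hle; omega)
      have hrest := ih (2 * t + 1) (r - 2 ^ h) (by rw [pow_succ] at hr; omega)
        (by rw [hmid]; rw [htwo] at hle; omega)
      rw [hmid, add_assoc, Nat.add_sub_cancel' hr'] at hrest
      rw [hmid] at hblock
      calc |f (2 * t * 2 ^ h + r) - f (2 * t * 2 ^ h)|
          ≤ |f (2 * t * 2 ^ h + r) - f (2 * t * 2 ^ h + 2 ^ h)|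
            + |f (2 * t * 2 ^ h + 2 ^ h) - f (2 * t * 2 ^ h)| := abs_sub_le _ _ _
        _ ≤ ∑ h' ∈ range h, B h' + B h := add_le_add hrest hblock

lemma abs_sub_le_sqrt_dyadicLevelSqSum {h u : ℕ} (hu : (u + 1) * 2 ^ h ≤ 2 ^ s) :
    |f ((u + 1) * 2 ^ h) - f (u * 2 ^ h)| ≤ √(dyadicLevelSqSum f s h) := by
  have hhs : h ≤ s := by
    by_contra! hlt
    have := Nat.pow_lt_pow_right (by norm_num : 1 < 2) hlt
    have : 2 ^ h ≤ (u + 1) * 2 ^ h := Nat.le_mul_of_pos_left _ (by omega)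
    omega
  have hmem : u ∈ range (2 ^ (s - h)) := by
    rw [mem_range]
    rw [← Nat.pow_sub_mul_pow 2 hhs] at hu
    have := Nat.le_of_mul_le_mul_right hu (by positivity)
    omega
  rw [← Real.sqrt_sq_eq_abs]
  exact Real.sqrt_le_sqrt (single_le_sum (f := fun u => (f ((u + 1) * 2 ^ h) - f (u * 2 ^ h)) ^ 2)
    (fun _ _ => sq_nonneg _) hmem)

lemma abs_sub_le_sqrt_mul_dyadicSqSum {j : ℕ} (hj : j ≤ 2 ^ s) :
    |f j - f 0| ≤ √((s + 1) * dyadicSqSum f s) := by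
  have hchain := abs_sub_le_of_dyadic_blocks (fun h => Real.sqrt_nonneg _)
    (fun h u hu => abs_sub_le_sqrt_dyadicLevelSqSum (f := f) hu) (s + 1) 0 j
    (by rw [pow_succ]; have := s.one_le_two_pow; omega) (by simpa using hj)
  have hcs := Real.sum_sqrt_mul_sqrt_le (range (s + 1)) (f := fun _ => (1 : ℝ))
    (g := dyadicLevelSqSum f s) (fun _ => zero_le_one) (dyadicLevelSqSum_nonneg f s)
  simp only [Real.sqrt_one, one_mul, sum_const, card_range, nsmul_eq_mul, mul_one] at hcs
  simp only [zero_mul, zero_add] at hchain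
  rw [Real.sqrt_mul (by positivity), dyadicSqSum]
  push_cast at hcs
  linarith

end Dyadic

section Chaining

variable {X : Type*} [MeasurableSpace X] {μ : Measure X}

lemma ae_eventually_lt_of_summable_integral_div [IsFiniteMeasure μ] {Y : ℕ → X → ℝ}
    {l : ℕ → ℝ} (hY0 : ∀ s x, 0 ≤ Y s x) (hY : ∀ s, Integrable (Y s) μ) (hl : ∀ s, 0 < l s)
    (hsum : Summable fun s => (∫ x, Y s x ∂μ) / l s) :
    ∀ᵐ x ∂μ, ∀ᶠ s in atTop, Y s x < l s := by
  have hmarkov : ∀ s, μ.real {x | l s ≤ Y s x} ≤ (∫ x, Y s x ∂μ) / l s := fun s => by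
    rw [le_div_iff₀ (hl s), mul_comm]
    exact mul_meas_ge_le_integral_of_nonneg (ae_of_all _ (hY0 s)) (hY s) _
  have hfinite : ∑' s, μ {x | l s ≤ Y s x} ≠ ⊤ := by
    rw [tsum_congr fun s => (ofReal_measureReal (μ := μ) (s := {x | l s ≤ Y s x})).symm,
      ← ENNReal.ofReal_tsum_of_nonneg (fun s => measureReal_nonneg)
      (hsum.of_nonneg_of_le (fun s => measureReal_nonneg) hmarkov)]
    exact ENNReal.ofReal_ne_top
  filter_upwards [ae_eventually_notMem hfinite] with x hx
  exact hx.mono fun s hs => not_le.mp hs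

lemma integral_dyadicSqSum_le {g : ℕ → X → ℝ} {G : ℕ → ℝ}
    (hint : ∀ m n, Integrable (fun x => (g n x - g m x) ^ 2) μ)
    (hG : ∀ m n, m ≤ n → ∫ x, (g n x - g m x) ^ 2 ∂μ ≤ G n - G m) (s : ℕ) :
    ∫ x, dyadicSqSum (fun j => g j x) s ∂μ ≤ (s + 1) * (G (2 ^ s) - G 0) := by
  have hlevel : ∀ h ∈ range (s + 1),
      ∫ x, dyadicLevelSqSum (fun j => g j x) s h ∂μ ≤ G (2 ^ s) - G 0 := fun h hh => by
    have hhs : h ≤ s := Nat.lt_succ_iff.mp (mem_range.mp hh)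
    calc ∫ x, dyadicLevelSqSum (fun j => g j x) s h ∂μ
        = ∑ u ∈ range (2 ^ (s - h)), ∫ x, (g ((u + 1) * 2 ^ h) x - g (u * 2 ^ h) x) ^ 2 ∂μ :=
          integral_finsetSum _ fun _ _ => hint _ _
      _ ≤ ∑ u ∈ range (2 ^ (s - h)), (G ((u + 1) * 2 ^ h) - G (u * 2 ^ h)) :=
          sum_le_sum fun u _ => hG _ _ (Nat.mul_le_mul_right _ u.le_succ)
      _ = G (2 ^ s) - G 0 := by
          rw [sum_range_sub (fun u => G (u * 2 ^ h)), Nat.pow_sub_mul_pow 2 hhs, zero_mul]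
  calc ∫ x, dyadicSqSum (fun j => g j x) s ∂μ
      = ∑ h ∈ range (s + 1), ∫ x, dyadicLevelSqSum (fun j => g j x) s h ∂μ :=
        integral_finsetSum _ fun _ _ => integrable_finsetSum _ fun _ _ => hint _ _
    _ ≤ ∑ h ∈ range (s + 1), (G (2 ^ s) - G 0) := sum_le_sum hlevel
    _ = (s + 1) * (G (2 ^ s) - G 0) := by simp [mul_sub]

lemma summable_natCast_add_one_rpow {q : ℝ} (hq : q < -1) :
    Summable fun s : ℕ => ((s : ℝ) + 1) ^ q := by
  have := (summable_nat_add_iff 1).mpr (Real.summable_nat_rpow.mpr hq)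
  simpa using this

lemma ae_eventually_abs_sub_le_of_integral_sq_le [IsFiniteMeasure μ] {g : ℕ → X → ℝ}
    {G : ℕ → ℝ} {c p : ℝ}
    (hint : ∀ m n, Integrable (fun x => (g n x - g m x) ^ 2) μ)
    (hG : ∀ m n, m ≤ n → ∫ x, (g n x - g m x) ^ 2 ∂μ ≤ G n - G m)
    (hGc : ∀ s : ℕ, G (2 ^ s) - G 0 ≤ c * 2 ^ s) (hp : 3 / 2 < p) :
    ∀ᵐ x ∂μ, ∀ᶠ s : ℕ in atTop, ∀ j ≤ 2 ^ s,
      |g j x - g 0 x| ≤ ((s : ℝ) + 1) ^ p * √(2 ^ s) := by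
  set l : ℕ → ℝ := fun s => ((s : ℝ) + 1) ^ (2 * p - 1) * 2 ^ s
  have hl : ∀ s, 0 < l s := fun s => by positivity
  have hY0 : ∀ s x, 0 ≤ dyadicSqSum (fun j => g j x) s := fun s x =>
    sum_nonneg fun h _ => dyadicLevelSqSum_nonneg _ s h
  have hYint : ∀ s, Integrable (fun x => dyadicSqSum (fun j => g j x) s) μ := fun s =>
    integrable_finsetSum _ fun _ _ => integrable_finsetSum _ fun _ _ => hint _ _
  -- Markov's bound for level `s` is `c (s+1)^(2-2p)`, summable precisely because `p > 3/2`.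
  have hratio : ∀ s : ℕ, (∫ x, dyadicSqSum (fun j => g j x) s ∂μ) / l s
      ≤ c * ((s : ℝ) + 1) ^ (2 - 2 * p) := fun s => by
    rw [div_le_iff₀ (hl s)]
    calc ∫ x, dyadicSqSum (fun j => g j x) s ∂μ ≤ (s + 1) * (c * 2 ^ s) :=
          (integral_dyadicSqSum_le hint hG s).trans
            (mul_le_mul_of_nonneg_left (hGc s) (by positivity))
      _ = c * ((s : ℝ) + 1) ^ (2 - 2 * p) * l s := by
          have : ((s : ℝ) + 1) ^ (2 - 2 * p) * ((s : ℝ) + 1) ^ (2 * p - 1) = (s : ℝ) + 1 := by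
            rw [← Real.rpow_add (by positivity)]; norm_num
          simp only [l]
          linear_combination (-(c * 2 ^ s)) * this
  have hsum : Summable fun s => (∫ x, dyadicSqSum (fun j => g j x) s ∂μ) / l s :=
    ((summable_natCast_add_one_rpow (by linarith)).mul_left c).of_nonneg_of_le
      (fun s => div_nonneg (integral_nonneg (hY0 s)) (hl s).le) hratio
  filter_upwards [ae_eventually_lt_of_summable_integral_div hY0 hYint hl hsum] with x hx
  refine hx.mono fun s hs j hj =>
    (abs_sub_le_sqrt_mul_dyadicSqSum (f := fun j => g j x) hj).trans ?_
  have hsq : ((s : ℝ) + 1) * l s = (((s : ℝ) + 1) ^ p) ^ 2 * 2 ^ s := by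
    rw [sq, ← Real.rpow_add (by positivity), ← mul_assoc, mul_comm _ (_ ^ (2 * p - 1)),
      ← Real.rpow_add_one (by positivity)]
    ring_nf
  calc √((s + 1) * dyadicSqSum (fun j => g j x) s) ≤ √((s + 1) * l s) :=
        Real.sqrt_le_sqrt (mul_le_mul_of_nonneg_left hs.le (by positivity))
    _ = ((s : ℝ) + 1) ^ p * √(2 ^ s) := by
        rw [hsq, Real.sqrt_mul (by positivity), Real.sqrt_sq (by positivity)]

end Chaining

section HittingIndex

-- junk value `0` (`sInf ∅ = 0`) when `F` never reaches `j`
noncomputable def hittingIndex (F : ℕ → ℝ) (j : ℕ) : ℕ := sInf {N | (j : ℝ) ≤ F N}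

variable {F : ℕ → ℝ}

lemma hittingIndex_le {j N : ℕ} (h : (j : ℝ) ≤ F N) : hittingIndex F j ≤ N :=
  Nat.sInf_le h

lemma le_apply_hittingIndex (hF : Tendsto F atTop atTop) (j : ℕ) :
    (j : ℝ) ≤ F (hittingIndex F j) :=
  Nat.sInf_mem (hF.eventually_ge_atTop (j : ℝ)).exists

lemma lt_hittingIndex (hFmono : Monotone F) (hF : Tendsto F atTop atTop) {j N : ℕ}
    (h : F N < j) : N < hittingIndex F j := by
  by_contra! hle
  exact (le_apply_hittingIndex hF j).not_gt ((hFmono hle).trans_lt h)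

lemma hittingIndex_zero (hF0 : F 0 = 0) : hittingIndex F 0 = 0 :=
  Nat.le_zero.mp (hittingIndex_le (by simp [hF0]))

lemma hittingIndex_mono (hF : Tendsto F atTop atTop) : Monotone (hittingIndex F) :=
  fun _ _ hjk => hittingIndex_le ((Nat.cast_le.mpr hjk).trans (le_apply_hittingIndex hF _))

lemma apply_hittingIndex_le (hF0 : F 0 = 0) (hFsucc : ∀ n, F (n + 1) ≤ F n + 1) (j : ℕ) :
    F (hittingIndex F j) ≤ j + 1 := by
  cases hM : hittingIndex F j with
  | zero => rw [hF0]; positivity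
  | succ m =>
    have hmiss : ¬ (j : ℝ) ≤ F m := Nat.notMem_of_lt_sInf (show m < hittingIndex F j by omega)
    linarith [hFsucc m]

lemma exists_abs_sub_le_hittingIndex {S : ℕ → ℝ} (hS : Monotone S) (hFmono : Monotone F)
    (hF0 : F 0 = 0) (hFsucc : ∀ n, F (n + 1) ≤ F n + 1) (hF : Tendsto F atTop atTop) (N : ℕ) :
    ∃ i ≤ ⌊F N⌋₊ + 1,
      |S N - F N| ≤ |S (hittingIndex F i) - F (hittingIndex F i)| + 2 := by
  set j := ⌊F N⌋₊
  have hFN : 0 ≤ F N := hF0 ▸ hFmono (Nat.zero_le N)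
  have hlo : hittingIndex F j ≤ N := hittingIndex_le (Nat.floor_le hFN)
  have hhi : N < hittingIndex F (j + 1) :=
    lt_hittingIndex hFmono hF (by push_cast; exact Nat.lt_floor_add_one _)
  rcases le_total 0 (S N - F N) with hpos | hneg
  · refine ⟨j + 1, le_rfl, ?_⟩
    have := apply_hittingIndex_le hF0 hFsucc (j + 1)
    have := hS hhi.le
    have := Nat.floor_le hFN
    push_cast at *
    rw [abs_of_nonneg hpos]
    linarith [le_abs_self (S (hittingIndex F (j + 1)) - F (hittingIndex F (j + 1)))]
  · refine ⟨j, by omega, ?_⟩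
    have := le_apply_hittingIndex hF j
    have := hS hlo
    have := Nat.lt_floor_add_one (F N)
    rw [abs_of_nonpos hneg]
    linarith [neg_abs_le (S (hittingIndex F j) - F (hittingIndex F j))]

end HittingIndex

section Rate

lemma natCast_add_one_rpow_mul_sqrt_le {p t : ℝ} (hp : 0 ≤ p) (ht : 1 ≤ t) {s : ℕ}
    (hs : (2 : ℝ) ^ s ≤ 2 * t) :
    ((s : ℝ) + 1) ^ p * √(2 ^ s) ≤
      √2 * (3 / Real.log 2) ^ p * (t ^ (1 / 2 : ℝ) * Real.log (t + 2) ^ p) := by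
  have hlog2 : 0 < Real.log 2 := Real.log_pos one_lt_two
  have hlogt : Real.log t ≤ Real.log (t + 2) := Real.log_le_log (by linarith) (by linarith)
  have hlog2t : Real.log 2 ≤ Real.log (t + 2) := Real.log_le_log (by norm_num) (by linarith)
  have hslog : (s : ℝ) * Real.log 2 ≤ Real.log 2 + Real.log t := by
    rw [← Real.log_pow, ← Real.log_mul (by norm_num) (by linarith)]
    exact Real.log_le_log (by positivity) hs
  have hs1 : (s : ℝ) + 1 ≤ 3 / Real.log 2 * Real.log (t + 2) := by
    rw [div_mul_eq_mul_div, le_div_iff₀ hlog2]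
    linarith
  have hpow : ((s : ℝ) + 1) ^ p ≤ (3 / Real.log 2) ^ p * Real.log (t + 2) ^ p := by
    rw [← Real.mul_rpow (div_pos three_pos hlog2).le (by linarith)]
    exact Real.rpow_le_rpow (by positivity) hs1 hp
  have hsqrt : √(2 ^ s) ≤ √2 * t ^ (1 / 2 : ℝ) := by
    rw [← Real.sqrt_eq_rpow, ← Real.sqrt_mul zero_le_two]
    exact Real.sqrt_le_sqrt hs
  calc ((s : ℝ) + 1) ^ p * √(2 ^ s)
      ≤ ((3 / Real.log 2) ^ p * Real.log (t + 2) ^ p) * (√2 * t ^ (1 / 2 : ℝ)) :=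
        mul_le_mul hpow hsqrt (by positivity) ((by positivity : (0 : ℝ) ≤ _).trans hpow)
    _ = √2 * (3 / Real.log 2) ^ p * (t ^ (1 / 2 : ℝ) * Real.log (t + 2) ^ p) := by ring

lemma abs_le_of_forall_dyadic_le {f : ℕ → ℝ} {p : ℝ} {s₀ : ℕ} (hp : 0 ≤ p)
    (h : ∀ s ≥ s₀, ∀ j ≤ 2 ^ s, |f j - f 0| ≤ ((s : ℝ) + 1) ^ p * √(2 ^ s))
    {i j : ℕ} {t : ℝ} (hi : i ≤ j + 1) (hjt : (j : ℝ) ≤ t) :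
    |f i| ≤ |f 0| + ((s₀ : ℝ) + 1) ^ p * √(2 ^ s₀) +
      √2 * (3 / Real.log 2) ^ p * (t ^ (1 / 2 : ℝ) * Real.log (t + 2) ^ p) := by
  have ht : 0 ≤ t := (Nat.cast_nonneg j).trans hjt
  have hψ : 0 ≤ √2 * (3 / Real.log 2) ^ p * (t ^ (1 / 2 : ℝ) * Real.log (t + 2) ^ p) := by
    have := Real.log_nonneg (show (1 : ℝ) ≤ t + 2 by linarith)
    positivity
  have hi0 : |f i| ≤ |f 0| + |f i - f 0| := by
    linarith [abs_sub_abs_le_abs_sub (f i) (f 0)]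
  by_cases hsmall : j + 1 ≤ 2 ^ s₀
  · linarith [h s₀ le_rfl i (hi.trans hsmall)]
  · -- the dyadic scale `2^s` with `j < 2^s ≤ 2j`
    set s := Nat.log 2 j + 1
    have hj0 : j ≠ 0 := by have := s₀.one_le_two_pow; omega
    have hjs : j < 2 ^ s := Nat.lt_pow_succ_log_self one_lt_two j
    have hs₀ : s₀ ≤ s :=
      ((Nat.pow_lt_pow_iff_right (by norm_num)).mp (by omega : 2 ^ s₀ < 2 ^ s)).le
    have hs2j : 2 ^ s ≤ 2 * j := by
      rw [pow_succ, mul_comm]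
      exact Nat.mul_le_mul_left 2 (Nat.pow_log_le_self 2 hj0)
    have h2s : (2 : ℝ) ^ s ≤ 2 * t := by
      have : ((2 ^ s : ℕ) : ℝ) ≤ 2 * j := by exact_mod_cast hs2j
      push_cast at this
      linarith
    have hrate := natCast_add_one_rpow_mul_sqrt_le hp
      ((Nat.one_le_cast.mpr (Nat.one_le_iff_ne_zero.mpr hj0)).trans hjt) h2s
    have := h s hs₀ i (by omega)
    have : 0 ≤ ((s₀ : ℝ) + 1) ^ p * √(2 ^ s₀) := by positivity
    linarith

end Rate

section MonotoneProcess

variable {X : Type*} [MeasurableSpace X] {μ : Measure X} [IsFiniteMeasure μ]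
  {S : ℕ → X → ℝ} {F : ℕ → ℝ} {K p : ℝ}

lemma ae_eventually_abs_sub_hittingIndex_le (hS : ∀ n, MemLp (S n) 2 μ)
    (hmean : ∀ n, μ[S n] = F n) (hF0 : F 0 = 0) (hFsucc : ∀ n, F (n + 1) ≤ F n + 1)
    (hFtop : Tendsto F atTop atTop) (hK : 0 ≤ K)
    (hvar : ∀ m n, m ≤ n → Var[S n - S m; μ] ≤ K * (F n - F m)) (hp : 3 / 2 < p) :
    ∀ᵐ x ∂μ, ∀ᶠ s : ℕ in atTop, ∀ j ≤ 2 ^ s,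
      |(S (hittingIndex F j) x - F (hittingIndex F j)) -
        (S (hittingIndex F 0) x - F (hittingIndex F 0))| ≤ ((s : ℝ) + 1) ^ p * √(2 ^ s) := by
  have hsq : ∀ m n, ∫ x, ((S n x - F n) - (S m x - F m)) ^ 2 ∂μ = Var[S n - S m; μ] :=
    fun m n => by
      rw [variance_eq_integral ((hS n).sub (hS m)).aestronglyMeasurable.aemeasurable]
      simp only [Pi.sub_apply]
      rw [integral_sub ((hS n).integrable one_le_two) ((hS m).integrable one_le_two),
        hmean, hmean]
      congr 1 with x
      ring
  have hint : ∀ m n, Integrable (fun x => ((S n x - F n) - (S m x - F m)) ^ 2) μ := fun m n =>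
    (((hS n).sub (memLp_const (F n))).sub ((hS m).sub (memLp_const (F m)))).integrable_sq
  have hGc : ∀ s : ℕ, K * F (hittingIndex F (2 ^ s)) - K * F (hittingIndex F 0) ≤
      2 * K * 2 ^ s := fun s => by
    have := apply_hittingIndex_le hF0 hFsucc (2 ^ s)
    have : (1 : ℝ) ≤ 2 ^ s := one_le_pow₀ one_le_two
    rw [hittingIndex_zero hF0, hF0]
    push_cast at *
    nlinarith
  exact ae_eventually_abs_sub_le_of_integral_sq_le
    (g := fun j x => S (hittingIndex F j) x - F (hittingIndex F j))
    (G := fun j => K * F (hittingIndex F j)) (fun m n => hint _ _)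
    (fun m n hmn => (hsq _ _).trans_le
      ((hvar _ _ (hittingIndex_mono hFtop hmn)).trans_eq (mul_sub _ _ _))) hGc hp

theorem ae_abs_sub_le_of_variance_le (hS : ∀ n, MemLp (S n) 2 μ)
    (hSmono : ∀ x, Monotone fun n => S n x) (hmean : ∀ n, μ[S n] = F n) (hF0 : F 0 = 0)
    (hFsucc : ∀ n, F (n + 1) ≤ F n + 1) (hFtop : Tendsto F atTop atTop) (hK : 0 ≤ K)
    (hvar : ∀ m n, m ≤ n → Var[S n - S m; μ] ≤ K * (F n - F m)) (hp : 3 / 2 < p) :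
    ∀ᵐ x ∂μ, ∃ A, ∀ N, |S N x - F N| ≤ A * (F N ^ (1 / 2 : ℝ) * Real.log (F N + 2) ^ p + 1) := by
  have hFmono : Monotone F := fun m n hmn => by
    rw [← hmean, ← hmean]
    exact integral_mono ((hS m).integrable one_le_two) ((hS n).integrable one_le_two)
      fun x => hSmono x hmn
  filter_upwards [ae_eventually_abs_sub_hittingIndex_le hS hmean hF0 hFsucc hFtop hK hvar hp]
    with x hx
  obtain ⟨s₀, hs₀⟩ := eventually_atTop.mp hx
  set c := √2 * (3 / Real.log 2) ^ p
  set A₀ := |S (hittingIndex F 0) x - F (hittingIndex F 0)| + ((s₀ : ℝ) + 1) ^ p * √(2 ^ s₀) + 2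
  refine ⟨A₀ + c, fun N => ?_⟩
  obtain ⟨i, hi, hN⟩ := exists_abs_sub_le_hittingIndex (hSmono x) hFmono hF0 hFsucc hFtop N
  have hFN : 0 ≤ F N := hF0 ▸ hFmono (Nat.zero_le N)
  have hMi := abs_le_of_forall_dyadic_le
    (f := fun j => S (hittingIndex F j) x - F (hittingIndex F j)) (by linarith) hs₀ hi
    (Nat.floor_le hFN)
  have hψ : 0 ≤ F N ^ (1 / 2 : ℝ) * Real.log (F N + 2) ^ p := by
    have := Real.log_nonneg (show (1 : ℝ) ≤ F N + 2 by linarith)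
    positivity
  have hc : 0 ≤ c := by positivity
  have hA₀ : 0 ≤ A₀ := by positivity
  calc |S N x - F N| ≤ A₀ + c * (F N ^ (1 / 2 : ℝ) * Real.log (F N + 2) ^ p) := by linarith
    _ ≤ (A₀ + c) * (F N ^ (1 / 2 : ℝ) * Real.log (F N + 2) ^ p + 1) := by nlinarith

end MonotoneProcess

section Indicators

variable {X : Type*} [MeasurableSpace X] {μ : Measure X} [IsProbabilityMeasure μ]

lemma memLp_indicator_one {A : Set X} (hA : MeasurableSet A) :
    MemLp (A.indicator (1 : X → ℝ)) 2 μ :=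
  memLp_indicator_const 2 hA 1 (Or.inr (measure_ne_top μ A))

lemma covariance_indicator_one {A B : Set X} (hA : MeasurableSet A) (hB : MeasurableSet B) :
    cov[A.indicator 1, B.indicator 1; μ] =
      (μ (A ∩ B)).toReal - (μ A).toReal * (μ B).toReal := by
  rw [covariance_eq_sub (memLp_indicator_one hA) (memLp_indicator_one hB),
    ← Set.inter_indicator_one,
    integral_indicator_one (hA.inter hB), integral_indicator_one hA, integral_indicator_one hB]
  rfl

lemma sum_filter_lt_sub_le_tsum {C : ℕ → ℝ} (hC0 : ∀ k, 0 ≤ C k) (hC : Summable C)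
    (s : Finset ℕ) (i : ℕ) : ∑ j ∈ s with j < i, C (i - j) ≤ ∑' k, C k := by
  rw [← sum_image (g := (i - ·)) fun j hj j' hj' h => by
    simp only [coe_filter, Set.mem_ofPred_eq] at hj hj' h; omega]
  exact hC.sum_le_tsum _ fun k _ => hC0 k

lemma variance_sum_indicator_le {E : ℕ → Set X} (hE : ∀ n, MeasurableSet (E n)) {C : ℕ → ℝ}
    (hC0 : ∀ k, 0 ≤ C k) (hC : Summable C)
    (hcorr : ∀ m n : ℕ, 1 ≤ m → m < n →
      (μ (E n ∩ E m)).toReal ≤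
        (μ (E n)).toReal * (μ (E m)).toReal + (μ (E n)).toReal * C (n - m))
    {s : Finset ℕ} (hs : ∀ i ∈ s, 1 ≤ i) :
    Var[fun x => ∑ i ∈ s, (E i).indicator 1 x; μ] ≤
      (1 + 2 * ∑' k, C k) * ∑ i ∈ s, (μ (E i)).toReal := by
  set a : ℕ → ℝ := fun i => (μ (E i)).toReal
  set b : ℕ → ℕ → ℝ := fun i j => if j < i then a i * C (i - j) else 0
  have hpair : ∀ i ∈ s, ∀ j ∈ s, cov[(E i).indicator 1, (E j).indicator 1; μ] ≤
      (if i = j then a i else 0) + b i j + b j i := fun i hi j hj => by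
    rw [covariance_indicator_one (hE i) (hE j)]
    rcases lt_trichotomy i j with hij | rfl | hij
    · have := hcorr i j (hs i hi) hij
      simp only [b, if_neg hij.ne, if_neg hij.not_gt, if_pos hij, Set.inter_comm (E i)]
      linarith
    · simp only [b, Set.inter_self, lt_irrefl, if_true, if_false]
      nlinarith [(μ (E i)).toReal_nonneg]
    · have := hcorr j i (hs j hj) hij
      simp only [b, if_neg hij.ne', if_neg hij.not_gt, if_pos hij]
      linarith
  have hrow : ∀ i ∈ s, ∑ j ∈ s, b i j ≤ a i * ∑' k, C k := fun i _ => by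
    rw [← sum_filter, ← mul_sum]
    exact mul_le_mul_of_nonneg_left (sum_filter_lt_sub_le_tsum hC0 hC s i) ENNReal.toReal_nonneg
  rw [variance_fun_sum' fun i _ => memLp_indicator_one (hE i)]
  calc ∑ i ∈ s, ∑ j ∈ s, cov[(E i).indicator 1, (E j).indicator 1; μ]
      ≤ ∑ i ∈ s, ∑ j ∈ s, ((if i = j then a i else 0) + b i j + b j i) :=
        sum_le_sum fun i hi => sum_le_sum fun j hj => hpair i hi j hj
    _ = ∑ i ∈ s, a i + ∑ i ∈ s, ∑ j ∈ s, b i j + ∑ i ∈ s, ∑ j ∈ s, b i j := by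
        simp only [sum_add_distrib, sum_ite_eq, sum_ite_mem, inter_self,
          sum_comm (f := fun i j => b j i)]
    _ ≤ ∑ i ∈ s, a i + ∑ i ∈ s, a i * ∑' k, C k + ∑ i ∈ s, a i * ∑' k, C k := by
        linarith [sum_le_sum hrow]
    _ = (1 + 2 * ∑' k, C k) * ∑ i ∈ s, a i := by rw [← sum_mul]; ring

end Indicators

section Counting

variable {X : Type*}

lemma Icc_one_eq_Ioc_zero (N : ℕ) : Icc 1 N = Ioc 0 N := Icc_add_one_left_eq_Ioc 0 N

lemma sum_Icc_one_sub_sum_Icc_one (f : ℕ → ℝ) {m n : ℕ} (h : m ≤ n) :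
    ∑ i ∈ Icc 1 n, f i - ∑ i ∈ Icc 1 m, f i = ∑ i ∈ Ioc m n, f i := by
  rw [Icc_one_eq_Ioc_zero, Icc_one_eq_Ioc_zero, ← sum_Ioc_consecutive f (Nat.zero_le m) h]
  ring

lemma tendsto_sum_Icc_one_of_not_summable {a : ℕ → ℝ} (ha : ∀ n, 0 ≤ a n) (h : ¬Summable a) :
    Tendsto (fun N => ∑ n ∈ Icc 1 N, a n) atTop atTop := by
  have hrange : ∀ N, ∑ n ∈ range (N + 1), a n + -a 0 = ∑ n ∈ Icc 1 N, a n := fun N => by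
    rw [range_eq_Ico, sum_eq_sum_Ico_succ_bot N.succ_pos, zero_add, Nat.succ_eq_add_one,
      Ico_add_one_right_eq_Icc]
    ring
  refine (tendsto_atTop_add_const_right _ (-a 0) ?_).congr hrange
  exact ((not_summable_iff_tendsto_nat_atTop_of_nonneg ha).mp h).comp (tendsto_add_atTop_nat 1)

noncomputable def indicatorSum (E : ℕ → Set X) (N : ℕ) (x : X) : ℝ :=
  ∑ n ∈ Icc 1 N, (E n).indicator 1 x

lemma ncard_eq_indicatorSum (E : ℕ → Set X) (x : X) (N : ℕ) :
    ({n : ℕ | 1 ≤ n ∧ n ≤ N ∧ x ∈ E n}.ncard : ℝ) = indicatorSum E N x := by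
  classical
  have h : {n : ℕ | 1 ≤ n ∧ n ≤ N ∧ x ∈ E n} = ↑({n ∈ Icc 1 N | x ∈ E n}) := by
    ext n
    simp [and_assoc]
  rw [h, Set.ncard_coe_finset, card_filter, indicatorSum]
  push_cast
  exact sum_congr rfl fun n _ => by by_cases hn : x ∈ E n <;> simp [hn]

lemma indicatorSum_mono (E : ℕ → Set X) (x : X) : Monotone fun N => indicatorSum E N x :=
  fun _ _ h => sum_le_sum_of_subset_of_nonneg (Icc_subset_Icc_right h)
    fun _ _ _ => Set.indicator_nonneg (fun _ _ => zero_le_one) _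

variable [MeasurableSpace X] {μ : Measure X}

lemma ae_exists_abs_ncard_sub_le_of_summable [IsFiniteMeasure μ] {E : ℕ → Set X}
    (hsum : Summable fun n => (μ (E n)).toReal) :
    ∀ᵐ x ∂μ, ∃ K, ∀ N, |({n : ℕ | 1 ≤ n ∧ n ≤ N ∧ x ∈ E n}.ncard : ℝ) -
      ∑ n ∈ Icc 1 N, (μ (E n)).toReal| ≤ K := by
  have hfinite : ∑' n, μ (E n) ≠ ⊤ := by
    rw [tsum_congr fun n => (ENNReal.ofReal_toReal (measure_ne_top μ (E n))).symm,
      ← ENNReal.ofReal_tsum_of_nonneg (fun n => ENNReal.toReal_nonneg) hsum]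
    exact ENNReal.ofReal_ne_top
  filter_upwards [ae_eventually_notMem hfinite] with x hx
  obtain ⟨N₀, hN₀⟩ := eventually_atTop.mp hx
  refine ⟨N₀ + ∑' n, (μ (E n)).toReal, fun N => ?_⟩
  have hcount : ({n : ℕ | 1 ≤ n ∧ n ≤ N ∧ x ∈ E n}.ncard : ℝ) ≤ N₀ := by
    rw [← Set.ncard_Iio_nat N₀, Nat.cast_le]
    exact Set.ncard_le_ncard (fun n hn => not_le.mp fun h => hN₀ n h hn.2.2) (Set.finite_Iio N₀)
  have hΦ : ∑ n ∈ Icc 1 N, (μ (E n)).toReal ≤ ∑' n, (μ (E n)).toReal :=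
    hsum.sum_le_tsum _ fun n _ => ENNReal.toReal_nonneg
  have hΦ0 : 0 ≤ ∑ n ∈ Icc 1 N, (μ (E n)).toReal := sum_nonneg fun n _ => ENNReal.toReal_nonneg
  rw [abs_le]
  constructor <;> linarith [Nat.cast_nonneg (α := ℝ) ({n : ℕ | 1 ≤ n ∧ n ≤ N ∧ x ∈ E n}.ncard)]

variable [IsProbabilityMeasure μ] {E : ℕ → Set X}

lemma memLp_indicatorSum (hE : ∀ n, MeasurableSet (E n)) (N : ℕ) :
    MemLp (indicatorSum E N) 2 μ := by
  have h : indicatorSum E N = ∑ n ∈ Icc 1 N, (E n).indicator 1 := by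
    ext x
    simp [indicatorSum]
  rw [h]
  exact memLp_finsetSum' _ fun n _ => memLp_indicator_one (hE n)

lemma integral_indicatorSum (hE : ∀ n, MeasurableSet (E n)) (N : ℕ) :
    μ[indicatorSum E N] = ∑ n ∈ Icc 1 N, (μ (E n)).toReal := by
  unfold indicatorSum
  rw [integral_finsetSum _ fun n _ => (memLp_indicator_one (hE n)).integrable one_le_two]
  exact sum_congr rfl fun n _ => integral_indicator_one (hE n)

lemma variance_indicatorSum_sub_le (hE : ∀ n, MeasurableSet (E n)) {C : ℕ → ℝ}
    (hC0 : ∀ k, 0 ≤ C k) (hC : Summable C)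
    (hcorr : ∀ m n : ℕ, 1 ≤ m → m < n →
      (μ (E n ∩ E m)).toReal ≤
        (μ (E n)).toReal * (μ (E m)).toReal + (μ (E n)).toReal * C (n - m))
    {m n : ℕ} (hmn : m ≤ n) :
    Var[indicatorSum E n - indicatorSum E m; μ] ≤ (1 + 2 * ∑' k, C k) *
      (∑ i ∈ Icc 1 n, (μ (E i)).toReal - ∑ i ∈ Icc 1 m, (μ (E i)).toReal) := by
  have hdiff : indicatorSum E n - indicatorSum E m =
      fun x => ∑ i ∈ Ioc m n, (E i).indicator 1 x := by
    ext x
    exact sum_Icc_one_sub_sum_Icc_one _ hmn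
  rw [hdiff, sum_Icc_one_sub_sum_Icc_one _ hmn]
  exact variance_sum_indicator_le hE hC0 hC hcorr fun i hi => by
    have := (mem_Ioc.mp hi).1; omega

end Counting

end QuantitativeBorelCantelli

open QuantitativeBorelCantelli

/-- Quantitative Borel–Cantelli lemma, Philipp. Let `(X, μ)` be a
probability space and `(E_n)_{n≥1}` measurable sets. With `A(N,x) = #{n ≤ N : x ∈ E_n}` and
`Φ(N) = Σ_{n≤N} μ(E_n)`, if there are nonnegative `C_k` with `Σ C_k < ∞` and
`μ(E_n ∩ E_m) ≤ μ(E_n)μ(E_m) + μ(E_n) C_{n−m}` for all `n > m ≥ 1`, then for every `ε > 0`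
and μ-a.e. `x` there is `K = K(x)` with
`|A(N,x) − Φ(N)| ≤ K (Φ(N)^{1/2} (log(Φ(N)+2))^{3/2+ε} + 1)` for all `N ≥ 1`. -/
theorem quantitative_borel_cantelli
    {X : Type*} [MeasurableSpace X] (μ : Measure X) [IsProbabilityMeasure μ]
    (E : ℕ → Set X) (hE : ∀ n, MeasurableSet (E n))
    (C : ℕ → ℝ) (hC0 : ∀ k, 0 ≤ C k) (hCsum : Summable C)
    (hcorr : ∀ m n : ℕ, 1 ≤ m → m < n →
      (μ (E n ∩ E m)).toReal ≤
        (μ (E n)).toReal * (μ (E m)).toReal + (μ (E n)).toReal * C (n - m))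
    (ε : ℝ) (hε : 0 < ε) :
    ∀ᵐ x ∂μ, ∃ K : ℝ, ∀ N : ℕ, 1 ≤ N →
      |({n : ℕ | 1 ≤ n ∧ n ≤ N ∧ x ∈ E n}.ncard : ℝ) -
          ∑ n ∈ Finset.Icc 1 N, (μ (E n)).toReal| ≤
        K * ((∑ n ∈ Finset.Icc 1 N, (μ (E n)).toReal) ^ ((1 : ℝ) / 2) *
          Real.log ((∑ n ∈ Finset.Icc 1 N, (μ (E n)).toReal) + 2) ^ ((3 : ℝ) / 2 + ε) + 1) := by
  by_cases hsum : Summable fun n => (μ (E n)).toReal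
  · filter_upwards [ae_exists_abs_ncard_sub_le_of_summable hsum] with x ⟨K, hK⟩
    refine ⟨K, fun N _ => (hK N).trans (le_mul_of_one_le_right ((abs_nonneg _).trans (hK N)) ?_)⟩
    have hΦ : 0 ≤ ∑ n ∈ Icc 1 N, (μ (E n)).toReal := sum_nonneg fun _ _ => ENNReal.toReal_nonneg
    have := Real.log_nonneg (show (1 : ℝ) ≤ ∑ n ∈ Icc 1 N, (μ (E n)).toReal + 2 by linarith)
    have : 0 ≤ (∑ n ∈ Icc 1 N, (μ (E n)).toReal) ^ ((1 : ℝ) / 2) *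
        Real.log (∑ n ∈ Icc 1 N, (μ (E n)).toReal + 2) ^ ((3 : ℝ) / 2 + ε) := by positivity
    linarith
  · have hK : 0 ≤ 1 + 2 * ∑' k, C k := by
      have : 0 ≤ ∑' k, C k := tsum_nonneg hC0
      linarith
    have hsucc : ∀ n, ∑ i ∈ Icc 1 (n + 1), (μ (E i)).toReal ≤
        ∑ i ∈ Icc 1 n, (μ (E i)).toReal + 1 := fun n => by
      rw [sum_Icc_succ_top (by omega)]
      have : (μ (E (n + 1))).toReal ≤ 1 := measureReal_le_one
      linarith
    filter_upwards [ae_abs_sub_le_of_variance_le (memLp_indicatorSum hE) (indicatorSum_mono E)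
      (integral_indicatorSum hE) (by simp) hsucc
      (tendsto_sum_Icc_one_of_not_summable (fun n => ENNReal.toReal_nonneg) hsum) hK
      (fun m n => variance_indicatorSum_sub_le hE hC0 hCsum hcorr) (p := 3 / 2 + ε)
      (by linarith)] with x ⟨K, hK⟩
    exact ⟨K, fun N _ => by simpa only [ncard_eq_indicatorSum] using hK N⟩
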